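/- Assume conditional parallel trends (CPT) and no anticipation (NA), and assume n₀(X) ≥ ε almost surely for some ε > 0. Define the doubly robust score ψ₀ := (1{E=e}/m₀)·(Y_t − Y_0 − g₀) − (1{E>t}·m₀(X)/(m₀·n₀(X)))·(Y_t − Y_0 − g₀) − θ₀·1{E=e}/m₀. Then the identification condition holds: E[ψ₀] = 0. (Appendix C: identification condition of the doubly robust score for CATT(e,l).) -/

import Mathlib

open MeasureTheory Filter

noncomputable section

/-- Conditional expectation `E[Z | A] := E[Z·1_A] / P(A)` given an event `A`. -/
def cexp {Ω : Type*} [MeasurableSpace Ω] (μ : Measure Ω) (Z : Ω → ℝ) (A : Set Ω) : ℝ :=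
  (∫ ω in A, Z ω ∂μ) / (μ A).toReal

/-- Observed outcome `Y_t := Y∞_t + Σ_{e=1}^{T} (Yᵉ_t − Y∞_t)·1{E = e}`. -/
def obsY {Ω : Type*} (T : ℕ) (E : Ω → ℕ) (Ye : ℕ → ℕ → Ω → ℝ) (Yinf : ℕ → Ω → ℝ)
    (t : ℕ) (ω : Ω) : ℝ :=
  Yinf t ω + ∑ e ∈ Finset.Icc 1 T, (Ye e t ω - Yinf t ω) * (if E ω = e then 1 else 0)

/-- Cohort-specific average treatment effect on the treated,
`CATT(e,l) := E[Yᵉ_{e+l} − Y∞_{e+l} | E = e]`. -/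
def CATT {Ω : Type*} [MeasurableSpace Ω] (μ : Measure Ω) (E : Ω → ℕ)
    (Ye : ℕ → ℕ → Ω → ℝ) (Yinf : ℕ → Ω → ℝ) (e : ℕ) (l : ℤ) : ℝ :=
  cexp μ (fun ω => Ye e ((e : ℤ) + l).toNat ω - Yinf ((e : ℤ) + l).toNat ω) {ω | E ω = e}

/-- Parallel trends in baseline outcome. -/
def PT {Ω : Type*} [MeasurableSpace Ω] (μ : Measure Ω) (T : ℕ) (E : Ω → ℕ)
    (Yinf : ℕ → Ω → ℝ) : Prop :=
  ∀ e ∈ Finset.Icc 1 T, ∀ s ≤ T, ∀ t ≤ T,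
    cexp μ (fun ω => Yinf t ω - Yinf s ω) {ω | E ω = e}
      = ∫ ω, (Yinf t ω - Yinf s ω) ∂μ

/-- No anticipatory behavior. -/
def NA {Ω : Type*} [MeasurableSpace Ω] (μ : Measure Ω) (T : ℕ)
    (Ye : ℕ → ℕ → Ω → ℝ) (Yinf : ℕ → Ω → ℝ) : Prop :=
  ∀ e ∈ Finset.Icc 1 T, ∀ t < e, Ye e t =ᵐ[μ] Yinf t

/-- The σ-algebra generated by the covariates `X`. -/
def sigmaX {Ω 𝒳 : Type*} [m𝒳 : MeasurableSpace 𝒳] (X : Ω → 𝒳) : MeasurableSpace Ω :=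
  MeasurableSpace.comap X m𝒳

/-- `g₀ := E[Y∞_t − Y∞_0 | σ(X)]` (a fixed version of the conditional expectation). -/
noncomputable def gZero {Ω 𝒳 : Type*} [MeasurableSpace Ω] [MeasurableSpace 𝒳]
    (μ : Measure Ω) (Yinf : ℕ → Ω → ℝ) (X : Ω → 𝒳) (t : ℕ) : Ω → ℝ :=
  μ[fun ω => Yinf t ω - Yinf 0 ω | sigmaX X]

/-- `m₀(X) := E[1{E=e} | σ(X)]`. -/
noncomputable def mZeroX {Ω 𝒳 : Type*} [MeasurableSpace Ω] [MeasurableSpace 𝒳]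
    (μ : Measure Ω) (E : Ω → ℕ) (X : Ω → 𝒳) (e : ℕ) : Ω → ℝ :=
  μ[fun ω => if E ω = e then (1 : ℝ) else 0 | sigmaX X]

/-- `n₀(X) := E[1{E>t} | σ(X)]`. -/
noncomputable def nZeroX {Ω 𝒳 : Type*} [MeasurableSpace Ω] [MeasurableSpace 𝒳]
    (μ : Measure Ω) (E : Ω → ℕ) (X : Ω → 𝒳) (t : ℕ) : Ω → ℝ :=
  μ[fun ω => if t < E ω then (1 : ℝ) else 0 | sigmaX X]

/-- Conditional parallel trends in baseline outcome, given `𝔊 = σ(X)`: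
`E[(Y∞_t − Y∞_s)·1{E=e} | 𝔊] = E[Y∞_t − Y∞_s | 𝔊]·E[1{E=e} | 𝔊]` a.s. -/
def CPT {Ω 𝒳 : Type*} [MeasurableSpace Ω] [MeasurableSpace 𝒳] (μ : Measure Ω) (T : ℕ)
    (E : Ω → ℕ) (Yinf : ℕ → Ω → ℝ) (X : Ω → 𝒳) : Prop :=
  ∀ e ∈ Finset.Icc 1 T, ∀ s ≤ T, ∀ t ≤ T,
    μ[fun ω => (Yinf t ω - Yinf s ω) * (if E ω = e then (1 : ℝ) else 0) | sigmaX X]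
      =ᵐ[μ] fun ω => (μ[fun ω' => Yinf t ω' - Yinf s ω' | sigmaX X]) ω
        * (mZeroX μ E X e) ω

/-!
Under no anticipation, `Y_t - Y_0 = (Yᵉ_t - Y∞_t) + (Y∞_t - Y∞_0)` on the cohort `{E = e}` and
`Y_t - Y_0 = Y∞_t - Y∞_0` on the not-yet-treated group `{E > t}`. Conditional parallel trends says
that the residual `Y∞_t - Y∞_0 - g₀` is conditionally uncorrelated given `X` with every cohort
indicator, and since `g₀` is `σ(X)`-measurable this means `E[(Y∞_t - Y∞_0 - g₀)·1{E = e'} | X] = 0`;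
summing over `e' > t` gives the same for `1{E > t}`. Hence the residual terms of `E[ψ₀]` vanish
(for the control term after pulling out the bounded `σ(X)`-measurable weight `m₀(X) / (m₀ n₀(X))`),
and what remains, `E[1{E = e}(Yᵉ_t - Y∞_t - θ₀)] / m₀`, is zero by the definition of `θ₀`.
-/

section CondExp

variable {Ω : Type*} {m mΩ : MeasurableSpace Ω} {μ : Measure Ω}

theorem integral_eq_zero_of_condExp_eq_zero (hm : m ≤ mΩ) [SigmaFinite (μ.trim hm)] {Y : Ω → ℝ}
    (hY0 : μ[Y | m] =ᵐ[μ] 0) :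
    ∫ ω, Y ω ∂μ = 0 := by
  rw [← integral_condExp hm, integral_congr_ae hY0]
  simp

theorem integral_mul_eq_zero_of_condExp_eq_zero (hm : m ≤ mΩ) [SigmaFinite (μ.trim hm)]
    {F Y : Ω → ℝ} {C : ℝ}
    (hF : StronglyMeasurable[m] F) (hFC : ∀ᵐ ω ∂μ, ‖F ω‖ ≤ C) (hY : Integrable Y μ)
    (hY0 : μ[Y | m] =ᵐ[μ] 0) :
    ∫ ω, F ω * Y ω ∂μ = 0 := by
  refine integral_eq_zero_of_condExp_eq_zero (Y := F * Y) hm ?_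
  filter_upwards [condExp_mul_of_stronglyMeasurable_left hF
    (hY.bdd_mul (hF.mono hm).aestronglyMeasurable hFC) hY, hY0] with ω h h₀
  rw [h, Pi.mul_apply, h₀, Pi.zero_apply, mul_zero]

theorem condExp_sub_condExp_mul_eq_zero [IsFiniteMeasure μ] {Z W : Ω → ℝ} {C : ℝ}
    (hZ : Integrable Z μ) (hW : AEStronglyMeasurable W μ) (hWC : ∀ᵐ ω ∂μ, ‖W ω‖ ≤ C)
    (hZW : μ[Z * W | m] =ᵐ[μ] μ[Z | m] * μ[W | m]) :
    μ[(Z - μ[Z | m]) * W | m] =ᵐ[μ] 0 := by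
  have hZW_int : Integrable (Z * W) μ := hZ.mul_bdd hW hWC
  have hgW_int : Integrable (μ[Z | m] * W) μ := integrable_condExp.mul_bdd hW hWC
  have hpull : μ[μ[Z | m] * W | m] =ᵐ[μ] μ[Z | m] * μ[W | m] :=
    condExp_mul_of_stronglyMeasurable_left stronglyMeasurable_condExp hgW_int
      (Integrable.of_bound hW C hWC)
  rw [sub_mul]
  filter_upwards [condExp_sub hZW_int hgW_int m, hZW, hpull] with ω h h₁ h₂
  rw [h, Pi.sub_apply, h₁, h₂, sub_self, Pi.zero_apply]

end CondExp

section Indicator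

variable {Ω : Type*} {p : Ω → Prop} [DecidablePred p] {Z : Ω → ℝ}

theorem mul_ite_eq_indicator (ω : Ω) :
    Z ω * (if p ω then 1 else 0) = {ω | p ω}.indicator Z ω := by
  simp [Set.indicator_apply]

variable [MeasurableSpace Ω] {μ : Measure Ω}

theorem MeasureTheory.Integrable.mul_ite (hp : MeasurableSet {ω | p ω}) (hZ : Integrable Z μ) :
    Integrable (fun ω => Z ω * (if p ω then 1 else 0)) μ := by
  simpa only [mul_ite_eq_indicator] using hZ.indicator hp

theorem integral_mul_ite (hp : MeasurableSet {ω | p ω}) :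
    ∫ ω, Z ω * (if p ω then 1 else 0) ∂μ = ∫ ω in {ω | p ω}, Z ω ∂μ := by
  simp only [mul_ite_eq_indicator, integral_indicator hp]

theorem integral_sub_cexp_mul_ite_eq_zero [IsFiniteMeasure μ] (hp : MeasurableSet {ω | p ω})
    (hμp : μ {ω | p ω} ≠ 0) (hZ : Integrable Z μ) :
    ∫ ω, (Z ω - cexp μ Z {ω | p ω}) * (if p ω then 1 else 0) ∂μ = 0 := by
  rw [integral_mul_ite (Z := fun ω => Z ω - _) hp, integral_sub hZ.integrableOn
    (integrableOn_const (measure_ne_top _ _)), setIntegral_const, cexp, measureReal_def,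
    smul_eq_mul, mul_div_cancel₀ _ (ENNReal.toReal_ne_zero.2 ⟨hμp, measure_ne_top _ _⟩), sub_self]

end Indicator

section Cohorts

variable {Ω : Type*} {T : ℕ} {E : Ω → ℕ} {Ye : ℕ → ℕ → Ω → ℝ} {Yinf : ℕ → Ω → ℝ}

theorem obsY_eq_of_mem {ω : Ω} (hω : E ω ∈ Finset.Icc 1 T) (s : ℕ) :
    obsY T E Ye Yinf s ω = Ye (E ω) s ω := by
  rw [obsY, Finset.sum_eq_single_of_mem _ hω fun e _ he => by simp [Ne.symm he]]
  simp

variable [MeasurableSpace Ω] {μ : Measure Ω}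

theorem integrable_obsY (hE : Measurable E) {s : ℕ}
    (hYe : ∀ e ∈ Finset.Icc 1 T, Integrable (Ye e s) μ) (hYinf : Integrable (Yinf s) μ) :
    Integrable (obsY T E Ye Yinf s) μ :=
  hYinf.add (integrable_finsetSum _ fun e he =>
    ((hYe e he).sub hYinf).mul_ite (p := fun ω => E ω = e) (hE (measurableSet_singleton e)))

theorem CATT_eq_cexp {e t : ℕ} {l : ℤ} (h : (e : ℤ) + l = t) :
    CATT μ E Ye Yinf e l = cexp μ (fun ω => Ye e t ω - Yinf t ω) {ω | E ω = e} := by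
  rw [CATT, h, Int.toNat_natCast]

theorem ae_obsY_eq_Yinf_of_lt (hNA : NA μ T Ye Yinf)
    (hsupp : ∀ᵐ ω ∂μ, E ω ∈ Finset.Icc 1 T) (s : ℕ) :
    ∀ᵐ ω ∂μ, s < E ω → obsY T E Ye Yinf s ω = Yinf s ω := by
  have hNA' : ∀ᵐ ω ∂μ, ∀ e ∈ Finset.Icc 1 T, s < e → Ye e s ω = Yinf s ω := by
    refine (Finset.eventually_all _).2 fun e he => ?_
    by_cases hs : s < e
    · filter_upwards [hNA e he s hs] with ω h _ using h
    · exact .of_forall fun ω h => absurd h hs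
  filter_upwards [hsupp, hNA'] with ω hω hNAω hs
  rw [obsY_eq_of_mem hω, hNAω _ hω hs]

theorem ae_obsY_sub_obsY_zero_mul_ite_eq (hNA : NA μ T Ye Yinf)
    (hsupp : ∀ᵐ ω ∂μ, E ω ∈ Finset.Icc 1 T) {e : ℕ} (he : 1 ≤ e) (t : ℕ) :
    ∀ᵐ ω ∂μ, (obsY T E Ye Yinf t ω - obsY T E Ye Yinf 0 ω) * (if E ω = e then 1 else 0)
      = (Ye e t ω - Yinf 0 ω) * (if E ω = e then 1 else 0) := by
  filter_upwards [hsupp, ae_obsY_eq_Yinf_of_lt hNA hsupp 0] with ω hω h₀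
  by_cases hωe : E ω = e
  · rw [obsY_eq_of_mem hω, h₀ (hωe ▸ he), hωe]
  · simp [hωe]

theorem ae_obsY_sub_obsY_zero_mul_ite_lt_eq (hNA : NA μ T Ye Yinf)
    (hsupp : ∀ᵐ ω ∂μ, E ω ∈ Finset.Icc 1 T) (t : ℕ) :
    ∀ᵐ ω ∂μ, (obsY T E Ye Yinf t ω - obsY T E Ye Yinf 0 ω) * (if t < E ω then 1 else 0)
      = (Yinf t ω - Yinf 0 ω) * (if t < E ω then 1 else 0) := by
  filter_upwards [ae_obsY_eq_Yinf_of_lt hNA hsupp t, ae_obsY_eq_Yinf_of_lt hNA hsupp 0]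
    with ω hₜ h₀
  by_cases htω : t < E ω
  · rw [hₜ htω, h₀ (t.zero_le.trans_lt htω)]
  · simp [htω]

section ConditionalParallelTrends

variable {𝒳 : Type*} [MeasurableSpace 𝒳] {X : Ω → 𝒳} {t : ℕ}

theorem ae_norm_mZeroX_div_le {e : ℕ} {M ε : ℝ} (hM : 0 < M) (hε : 0 < ε)
    (hn : ∀ᵐ ω ∂μ, ε ≤ nZeroX μ E X t ω) :
    ∀ᵐ ω ∂μ, ‖mZeroX μ E X e ω / (M * nZeroX μ E X t ω)‖ ≤ 1 / (M * ε) := by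
  have hm_le : ∀ᵐ ω ∂μ, |mZeroX μ E X e ω| ≤ 1 :=
    ae_bdd_abs_condExp_of_ae_bdd_abs (.of_forall fun ω => by split_ifs <;> simp)
  filter_upwards [hm_le, hn] with ω hmω hnω
  have hMn : M * ε ≤ M * nZeroX μ E X t ω := mul_le_mul_of_nonneg_left hnω hM.le
  rw [norm_div, Real.norm_eq_abs, Real.norm_of_nonneg ((mul_pos hM hε).le.trans hMn)]
  exact div_le_div₀ zero_le_one hmω (mul_pos hM hε) hMn

theorem stronglyMeasurable_mZeroX_div (M : ℝ) (e : ℕ) :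
    StronglyMeasurable[sigmaX X] fun ω => mZeroX μ E X e ω / (M * nZeroX μ E X t ω) :=
  (stronglyMeasurable_condExp.measurable.div
    (measurable_const.mul stronglyMeasurable_condExp.measurable)).stronglyMeasurable

variable [IsFiniteMeasure μ]

theorem condExp_trendResidual_mul_ite_eq_zero (hE : Measurable E) (hCPT : CPT μ T E Yinf X)
    (hYt : Integrable (Yinf t) μ) (hY0 : Integrable (Yinf 0) μ) (ht : t ≤ T) {e : ℕ}
    (he : e ∈ Finset.Icc 1 T) :
    μ[fun ω => (Yinf t ω - Yinf 0 ω - gZero μ Yinf X t ω) * (if E ω = e then 1 else 0)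
      | sigmaX X] =ᵐ[μ] 0 :=
  condExp_sub_condExp_mul_eq_zero (hYt.sub hY0)
    ((measurable_const.ite (hE (measurableSet_singleton e)) measurable_const).aestronglyMeasurable)
    (C := 1) (.of_forall fun ω => by split_ifs <;> simp)
    (hCPT e he 0 T.zero_le t ht)

theorem condExp_trendResidual_mul_ite_lt_eq_zero (hE : Measurable E)
    (hsupp : ∀ᵐ ω ∂μ, E ω ∈ Finset.Icc 1 T) (hCPT : CPT μ T E Yinf X)
    (hYt : Integrable (Yinf t) μ) (hY0 : Integrable (Yinf 0) μ) (ht : t ≤ T) :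
    μ[fun ω => (Yinf t ω - Yinf 0 ω - gZero μ Yinf X t ω) * (if t < E ω then 1 else 0)
      | sigmaX X] =ᵐ[μ] 0 := by
  set R : Ω → ℝ := fun ω => Yinf t ω - Yinf 0 ω - gZero μ Yinf X t ω
  have hR : Integrable R μ := (hYt.sub hY0).sub integrable_condExp
  have hcohorts : (fun ω => R ω * (if t < E ω then 1 else 0))
      =ᵐ[μ] ∑ e ∈ Finset.Icc (t + 1) T, fun ω => R ω * (if E ω = e then 1 else 0) := by
    filter_upwards [hsupp] with ω hω
    rw [Finset.mem_Icc] at hω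
    rw [Finset.sum_apply, ← Finset.mul_sum, Finset.sum_ite_eq]
    congr 1
    by_cases h : t < E ω <;> simp [h]
    omega
  have hzero : ∀ᵐ ω ∂μ, ∀ e ∈ Finset.Icc (t + 1) T,
      μ[fun ω => R ω * (if E ω = e then 1 else 0) | sigmaX X] ω = 0 :=
    (Finset.eventually_all _).2 fun e he =>
      condExp_trendResidual_mul_ite_eq_zero hE hCPT hYt hY0 ht
        (Finset.Icc_subset_Icc_left t.succ_pos he)
  have hsum := condExp_finsetSum (s := Finset.Icc (t + 1) T) (m := sigmaX X) fun e _ =>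
    hR.mul_ite (p := fun ω => E ω = e) (hE (measurableSet_singleton e))
  filter_upwards [condExp_congr_ae hcohorts, hsum, hzero] with ω h₁ h₂ h₃
  rw [h₁, h₂, Finset.sum_apply, Finset.sum_eq_zero h₃, Pi.zero_apply]

theorem integral_obsY_sub_gZero_sub_CATT_mul_ite_eq_zero (hX : Measurable X)
    (hE : Measurable E) (hsupp : ∀ᵐ ω ∂μ, E ω ∈ Finset.Icc 1 T) (hCPT : CPT μ T E Yinf X)
    (hNA : NA μ T Ye Yinf) (hYt : Integrable (Yinf t) μ) (hY0 : Integrable (Yinf 0) μ)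
    (ht : t ≤ T) {e : ℕ} {l : ℤ} (he : e ∈ Finset.Icc 1 T) (hel : (e : ℤ) + l = t)
    (hμe : μ {ω | E ω = e} ≠ 0) (hYe : Integrable (Ye e t) μ) :
    ∫ ω, (obsY T E Ye Yinf t ω - obsY T E Ye Yinf 0 ω - gZero μ Yinf X t ω
      - CATT μ E Ye Yinf e l) * (if E ω = e then 1 else 0) ∂μ = 0 := by
  set θ := CATT μ E Ye Yinf e l
  set R : Ω → ℝ := fun ω => Yinf t ω - Yinf 0 ω - gZero μ Yinf X t ω
  have hA : MeasurableSet {ω | E ω = e} := hE (measurableSet_singleton e)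
  have hcentered := Integrable.mul_ite (Z := fun ω => Ye e t ω - Yinf t ω - θ) hA
    ((hYe.sub hYt).sub (integrable_const θ))
  have hR : Integrable R μ := (hYt.sub hY0).sub integrable_condExp
  have hsplit : (fun ω => (obsY T E Ye Yinf t ω - obsY T E Ye Yinf 0 ω - gZero μ Yinf X t ω
      - θ) * (if E ω = e then 1 else 0)) =ᵐ[μ] fun ω =>
      (Ye e t ω - Yinf t ω - θ) * (if E ω = e then 1 else 0)
        + R ω * (if E ω = e then 1 else 0) := by
    filter_upwards [ae_obsY_sub_obsY_zero_mul_ite_eq hNA hsupp (Finset.mem_Icc.mp he).1 t]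
      with ω h
    linear_combination h
  rw [integral_congr_ae hsplit, integral_add hcentered (hR.mul_ite hA),
    integral_eq_zero_of_condExp_eq_zero hX.comap_le
      (condExp_trendResidual_mul_ite_eq_zero hE hCPT hYt hY0 ht he),
    show θ = _ from CATT_eq_cexp hel,
    integral_sub_cexp_mul_ite_eq_zero (Z := fun ω => Ye e t ω - Yinf t ω) hA hμe (hYe.sub hYt),
    add_zero]

theorem integral_mul_obsY_sub_gZero_mul_ite_lt_eq_zero (hX : Measurable X)
    (hE : Measurable E) (hsupp : ∀ᵐ ω ∂μ, E ω ∈ Finset.Icc 1 T) (hCPT : CPT μ T E Yinf X)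
    (hNA : NA μ T Ye Yinf) (hYt : Integrable (Yinf t) μ) (hY0 : Integrable (Yinf 0) μ)
    (ht : t ≤ T) {F : Ω → ℝ} {C : ℝ} (hF : StronglyMeasurable[sigmaX X] F)
    (hFC : ∀ᵐ ω ∂μ, ‖F ω‖ ≤ C) :
    ∫ ω, F ω * ((obsY T E Ye Yinf t ω - obsY T E Ye Yinf 0 ω - gZero μ Yinf X t ω)
      * (if t < E ω then 1 else 0)) ∂μ = 0 := by
  have hobs : (fun ω => F ω * ((obsY T E Ye Yinf t ω - obsY T E Ye Yinf 0 ω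
      - gZero μ Yinf X t ω) * (if t < E ω then 1 else 0))) =ᵐ[μ] fun ω =>
      F ω * ((Yinf t ω - Yinf 0 ω - gZero μ Yinf X t ω) * (if t < E ω then 1 else 0)) := by
    filter_upwards [ae_obsY_sub_obsY_zero_mul_ite_lt_eq hNA hsupp t] with ω h
    linear_combination F ω * h
  rw [integral_congr_ae hobs]
  exact integral_mul_eq_zero_of_condExp_eq_zero hX.comap_le hF hFC
    (((hYt.sub hY0).sub integrable_condExp).mul_ite (p := fun ω => t < E ω)
      (hE measurableSet_Ioi))
    (condExp_trendResidual_mul_ite_lt_eq_zero hE hsupp hCPT hYt hY0 ht)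

end ConditionalParallelTrends

end Cohorts

theorem doubly_robust_score_identification_general
    {Ω 𝒳 : Type*} [MeasurableSpace Ω] [MeasurableSpace 𝒳]
    (μ : Measure Ω) [IsProbabilityMeasure μ]
    (T : ℕ)
    (E : Ω → ℕ) (hE : Measurable E)
    (hsupp : μ {ω | 1 ≤ E ω ∧ E ω ≤ T} = 1)
    (hpos : ∀ e ∈ Finset.Icc 1 T, 0 < μ {ω | E ω = e})
    (Ye : ℕ → ℕ → Ω → ℝ) (Yinf : ℕ → Ω → ℝ)
    (hL2e : ∀ e ∈ Finset.Icc 1 T, ∀ t ≤ T, MemLp (Ye e t) 2 μ)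
    (hL2inf : ∀ t ≤ T, MemLp (Yinf t) 2 μ)
    (X : Ω → 𝒳) (hX : Measurable X)
    (hCPT : CPT μ T E Yinf X) (hNA : NA μ T Ye Yinf)
    (l t : ℕ) (hl : l ≤ t) (ht : t + 1 ≤ T)
    (he : t - l ∈ Finset.Icc 1 T)
    (ε : ℝ) (hε : 0 < ε) (hn : ∀ᵐ ω ∂μ, ε ≤ nZeroX μ E X t ω) :
    ∫ ω,
        ((if E ω = t - l then (1 : ℝ) else 0) / (μ {ω' | E ω' = t - l}).toReal
            * (obsY T E Ye Yinf t ω - obsY T E Ye Yinf 0 ω - gZero μ Yinf X t ω)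
          - (if t < E ω then (1 : ℝ) else 0) * mZeroX μ E X (t - l) ω
              / ((μ {ω' | E ω' = t - l}).toReal * nZeroX μ E X t ω)
            * (obsY T E Ye Yinf t ω - obsY T E Ye Yinf 0 ω - gZero μ Yinf X t ω)
          - CATT μ E Ye Yinf (t - l) (l : ℤ)
              * (if E ω = t - l then (1 : ℝ) else 0) / (μ {ω' | E ω' = t - l}).toReal) ∂μ
      = 0 := by
  have htT : t ≤ T := by omega
  have hsupp' : ∀ᵐ ω ∂μ, E ω ∈ Finset.Icc 1 T := by
    filter_upwards [(mem_ae_iff_prob_eq_one (hE measurableSet_Icc)).2 hsupp] with ω hω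
    exact Finset.mem_Icc.2 hω
  have hYinf (s : ℕ) (hs : s ≤ T) : Integrable (Yinf s) μ := (hL2inf s hs).integrable one_le_two
  have hYe (s : ℕ) (hs : s ≤ T) (e : ℕ) (he : e ∈ Finset.Icc 1 T) : Integrable (Ye e s) μ :=
    (hL2e e he s hs).integrable one_le_two
  have hΔ : Integrable (fun ω => obsY T E Ye Yinf t ω - obsY T E Ye Yinf 0 ω
      - gZero μ Yinf X t ω) μ :=
    ((integrable_obsY hE (hYe t htT) (hYinf t htT)).sub
      (integrable_obsY hE (hYe 0 T.zero_le) (hYinf 0 T.zero_le))).sub integrable_condExp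
  set e := t - l
  set M := (μ {ω | E ω = e}).toReal
  have hM : 0 < M := ENNReal.toReal_pos (hpos e he).ne' (measure_ne_top μ _)
  set θ := CATT μ E Ye Yinf e l
  have hw := ae_norm_mZeroX_div_le (e := e) hM hε hn
  have hw_meas := stronglyMeasurable_mZeroX_div (μ := μ) (E := E) (X := X) (t := t) M e
  refine (integral_congr_ae (g := fun ω => M⁻¹ * ((obsY T E Ye Yinf t ω - obsY T E Ye Yinf 0 ω
      - gZero μ Yinf X t ω - θ) * (if E ω = e then 1 else 0))
      - mZeroX μ E X e ω / (M * nZeroX μ E X t ω) * ((obsY T E Ye Yinf t ω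
        - obsY T E Ye Yinf 0 ω - gZero μ Yinf X t ω) * (if t < E ω then 1 else 0)))
    (.of_forall fun ω => by ring)).trans ?_
  rw [integral_sub ?_ ?_, integral_const_mul,
    integral_obsY_sub_gZero_sub_CATT_mul_ite_eq_zero hX hE hsupp' hCPT hNA (hYinf t htT)
      (hYinf 0 T.zero_le) htT he (by simp only [e]; omega) (hpos e he).ne' (hYe t htT e he),
    integral_mul_obsY_sub_gZero_mul_ite_lt_eq_zero hX hE hsupp' hCPT hNA (hYinf t htT)
      (hYinf 0 T.zero_le) htT hw_meas hw]
  · simp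
  · exact ((hΔ.sub (integrable_const θ)).mul_ite (hE (measurableSet_singleton e))).const_mul _
  · exact (hΔ.mul_ite (p := fun ω => t < E ω) (hE measurableSet_Ioi)).bdd_mul
      (hw_meas.mono hX.comap_le).aestronglyMeasurable hw

/-- Appendix C (doubly robust score, identification condition): under CPT and NA, with the
not-yet-treated propensity bounded away from zero, the doubly robust score
`ψ₀ := (1{E=e}/m₀)·(Y_t − Y_0 − g₀) − (1{E>t}·m₀(X)/(m₀·n₀(X)))·(Y_t − Y_0 − g₀)
  − θ₀·1{E=e}/m₀` satisfies `E[ψ₀] = 0`, where `e = t − l` and `θ₀ = CATT(e,l)`. -/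
theorem doubly_robust_score_identification
    {Ω 𝒳 : Type*} [MeasurableSpace Ω] [MeasurableSpace 𝒳]
    (μ : Measure Ω) [IsProbabilityMeasure μ]
    (T : ℕ) (hT : 1 ≤ T)
    (E : Ω → ℕ) (hE : Measurable E)
    (hsupp : μ {ω | 1 ≤ E ω ∧ E ω ≤ T} = 1)
    (hpos : ∀ e ∈ Finset.Icc 1 T, 0 < μ {ω | E ω = e})
    (Ye : ℕ → ℕ → Ω → ℝ) (Yinf : ℕ → Ω → ℝ)
    (hL2e : ∀ e ∈ Finset.Icc 1 T, ∀ t ≤ T, MemLp (Ye e t) 2 μ)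
    (hL2inf : ∀ t ≤ T, MemLp (Yinf t) 2 μ)
    (X : Ω → 𝒳) (hX : Measurable X)
    (hCPT : CPT μ T E Yinf X) (hNA : NA μ T Ye Yinf)
    (l t : ℕ) (hl : l ≤ t) (ht : t + 1 ≤ T)
    (he : t - l ∈ Finset.Icc 1 T)
    (ε : ℝ) (hε : 0 < ε) (hn : ∀ᵐ ω ∂μ, ε ≤ nZeroX μ E X t ω) :
    ∫ ω,
        ((if E ω = t - l then (1 : ℝ) else 0) / (μ {ω' | E ω' = t - l}).toReal
            * (obsY T E Ye Yinf t ω - obsY T E Ye Yinf 0 ω - gZero μ Yinf X t ω)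
          - (if t < E ω then (1 : ℝ) else 0) * mZeroX μ E X (t - l) ω
              / ((μ {ω' | E ω' = t - l}).toReal * nZeroX μ E X t ω)
            * (obsY T E Ye Yinf t ω - obsY T E Ye Yinf 0 ω - gZero μ Yinf X t ω)
          - CATT μ E Ye Yinf (t - l) (l : ℤ)
              * (if E ω = t - l then (1 : ℝ) else 0) / (μ {ω' | E ω' = t - l}).toReal) ∂μ
      = 0 :=
  doubly_robust_score_identification_general μ T E hE hsupp hpos Ye Yinf hL2e hL2inf X hX hCPT hNA l
    t hl ht he ε hε hn

end
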